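/- For u ∈ ℂ^{n+1}, r ∈ rad f, and s ∉ rad f, one has [D(u,r), ad t^s] = (u,s) σ(r,s) ad t^{r+s} in Der(ℂ_q). -/
import Mathlib


/-- `σ(a,b) = ∏_{0 ≤ i ≤ j ≤ n} q_{ji}^{a_j b_i}`. -/
noncomputable def sig {n : ℕ} (q : Fin (n+1) → Fin (n+1) → ℂˣ)
    (a b : Fin (n+1) → ℤ) : ℂˣ :=
  ∏ i : Fin (n+1), ∏ j : Fin (n+1), if i ≤ j then q j i ^ (a j * b i) else 1

/-- `f(a,b) = σ(a,b) σ(b,a)⁻¹`. -/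
noncomputable def ff {n : ℕ} (q : Fin (n+1) → Fin (n+1) → ℂˣ)
    (a b : Fin (n+1) → ℤ) : ℂˣ :=
  sig q a b * (sig q b a)⁻¹
/-- The inner derivation `ad x : y ↦ xy - yx` as a ℂ-linear map. -/
noncomputable def adL {C : Type*} [Ring C] [Algebra ℂ C] (x : C) :
    C →ₗ[ℂ] C :=
  LinearMap.mulLeft ℂ x - LinearMap.mulRight ℂ x

lemma sig_add_right {n : ℕ} (q : Fin (n+1) → Fin (n+1) → ℂˣ)
    (a b c : Fin (n+1) → ℤ) :
    sig q a (b + c) = sig q a b * sig q a c := by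
  unfold sig
  rw [← Finset.prod_mul_distrib]
  refine Finset.prod_congr rfl fun i _ => ?_
  rw [← Finset.prod_mul_distrib]
  refine Finset.prod_congr rfl fun j _ => ?_
  by_cases h : i ≤ j <;> simp [h, Pi.add_apply, mul_add, zpow_add]

lemma sig_add_left {n : ℕ} (q : Fin (n+1) → Fin (n+1) → ℂˣ)
    (a b c : Fin (n+1) → ℤ) :
    sig q (a + b) c = sig q a c * sig q b c := by
  unfold sig
  rw [← Finset.prod_mul_distrib]
  refine Finset.prod_congr rfl fun i _ => ?_
  rw [← Finset.prod_mul_distrib]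
  refine Finset.prod_congr rfl fun j _ => ?_
  by_cases h : i ≤ j <;> simp [h, Pi.add_apply, add_mul, zpow_add]

lemma adL_apply {C : Type*} [Ring C] [Algebra ℂ C] (x y : C) :
    adL x y = x * y - y * x := rfl

theorem stmt17 {n : ℕ} (q : Fin (n+1) → Fin (n+1) → ℂˣ)
    (hq1 : ∀ i, q i i = 1) (hq2 : ∀ i j, q i j = (q j i)⁻¹)
    {C : Type*} [Ring C] [Algebra ℂ C]
    (T : (Fin (n+1) → ℤ) → C)
    (hT : ∀ a b, T a * T b = ((sig q a b : ℂ)) • T (a + b))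
    (hT0 : T 0 = 1)
    (hTind : LinearIndependent ℂ T)
    (hTspan : Submodule.span ℂ (Set.range T) = ⊤)
    (P : (Fin (n+1) → ℤ) → Fin (n+1) → (C →ₗ[ℂ] C))
    (hP : ∀ a i b, P a i (T b) = ((b i : ℂ) * ((sig q a b : ℂ))) • T (a + b))
    (u : Fin (n+1) → ℂ) (r s : Fin (n+1) → ℤ)
    (hr : ∀ b, ff q r b = 1) (hs : ¬ ∀ b, ff q s b = 1) :
    (∑ i : Fin (n+1), u i • P r i) ∘ₗ adL (T s) -
        adL (T s) ∘ₗ (∑ i : Fin (n+1), u i • P r i) =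
      ((∑ i : Fin (n+1), u i * (s i : ℂ)) * ((sig q r s : ℂ))) •
        adL (T (r + s)) := by
  -- σ(r, x) = σ(x, r) for all x
  have hsym : ∀ b, (sig q r b : ℂ) = (sig q b r : ℂ) := by
    intro b
    have h := hr b
    unfold ff at h
    have : sig q r b = sig q b r := by
      rwa [mul_inv_eq_one] at h
    rw [this]
  -- the operator D applied to T c
  have hD : ∀ c, (∑ i : Fin (n+1), u i • P r i) (T c) =
      ((∑ i : Fin (n+1), u i * (c i : ℂ)) * (sig q r c : ℂ)) • T (r + c) := by
    intro c
    rw [LinearMap.sum_apply, Finset.sum_mul, Finset.sum_smul]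
    refine Finset.sum_congr rfl fun i _ => ?_
    rw [LinearMap.smul_apply, hP, smul_smul, mul_assoc]
  apply LinearMap.ext_on_range hTspan
  intro b
  have hTs : T s * T b = ((sig q s b : ℂ)) • T (s + b) := hT s b
  have hTbs : T b * T s = ((sig q b s : ℂ)) • T (s + b) := by
    rw [hT b s, add_comm b s]
  simp only [LinearMap.sub_apply, LinearMap.comp_apply, adL_apply, LinearMap.smul_apply,
    hTs, hTbs, map_sub, map_smul, hD]
  rw [hT s (r + b), hT (r + b) s, hT (r + s) b, hT b (r + s)]
  have e1 : s + (r + b) = r + (s + b) := by ring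
  have e2 : r + b + s = r + (s + b) := by ring
  have e3 : r + s + b = r + (s + b) := by ring
  have e4 : b + (r + s) = r + (s + b) := by ring
  rw [e1, e2, e3, e4, smul_sub, smul_sub]
  -- now everything is a scalar multiple of T (r + (s + b))
  simp only [smul_smul, ← sub_smul]
  congr 1
  have h1 : (sig q r (s + b) : ℂ) = (sig q r s : ℂ) * (sig q r b : ℂ) := by
    rw [sig_add_right]; push_cast; ring
  have h2 : (sig q s (r + b) : ℂ) = (sig q s r : ℂ) * (sig q s b : ℂ) := by
    rw [sig_add_right]; push_cast; ring
  have h3 : (sig q (r + b) s : ℂ) = (sig q r s : ℂ) * (sig q b s : ℂ) := by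
    rw [sig_add_left]; push_cast; ring
  have h4 : (sig q (r + s) b : ℂ) = (sig q r b : ℂ) * (sig q s b : ℂ) := by
    rw [sig_add_left]; push_cast; ring
  have h5 : (sig q b (r + s) : ℂ) = (sig q b r : ℂ) * (sig q b s : ℂ) := by
    rw [sig_add_right]; push_cast; ring
  have h6 : (∑ i : Fin (n+1), u i * ((s + b) i : ℂ)) =
      (∑ i : Fin (n+1), u i * (s i : ℂ)) + (∑ i : Fin (n+1), u i * (b i : ℂ)) := by
    rw [← Finset.sum_add_distrib]
    refine Finset.sum_congr rfl fun i _ => ?_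
    push_cast [Pi.add_apply]
    ring
  have hsr : (sig q s r : ℂ) = (sig q r s : ℂ) := (hsym s).symm
  have hbr : (sig q b r : ℂ) = (sig q r b : ℂ) := (hsym b).symm
  rw [h1, h2, h3, h4, h5, h6, hsr, hbr]
  ring
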